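/- arXiv:2002.10300 — 2 statements merged into one kernel-verified Lean document; each statement's English description precedes it below -/
import Mathlib

section
/- Let H be a division ring with center k such that H has finite dimension d as a k-vector space. Let n be a positive integer, let P = H_c[t₁,…,t_n] be the iterated polynomial ring in n central variables over H, and let F be a division ring that is a classical right quotient ring of P via an injective ring homomorphism φ : P → F. Then the center Z(F) of F is a field and the dimension of F as a (left) vector space over Z(F) equals d. -/
universe u v w x

/-- The subgroup of ring automorphisms of `M` fixing the image of `ι` pointwise
(the Galois group of the extension `M/F` given by `ι`). -/
def fixingAut {F M : Type*} [DivisionRing F] [DivisionRing M] (ι : F →+* M) :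
    Subgroup (RingAut M) where
  carrier := {σ | ∀ x : F, σ (ι x) = ι x}
  one_mem' := fun _ => rfl
  mul_mem' := by
    intro a b ha hb x
    show a (b (ι x)) = ι x
    rw [hb x, ha x]
  inv_mem' := by
    intro a ha x
    show a.symm (ι x) = ι x
    conv_lhs => rw [← ha x]
    exact a.symm_apply_apply _

/-- The extension `M/F` given by `ι : F →+* M` is Galois: every element of `M` fixed by all
ring automorphisms of `M` fixing `ι(F)` pointwise lies in `ι(F)`. -/
def IsGaloisExt {F M : Type*} [DivisionRing F] [DivisionRing M] (ι : F →+* M) : Prop :=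
  ∀ m : M, (∀ σ ∈ fixingAut ι, σ m = m) → m ∈ Set.range ι

/-- The ring `H[X]` of polynomial functions on a division ring `H`: the subring of `H → H`
(with pointwise operations) generated by the constant functions and the identity function. -/
def polyFunRing (H : Type*) [DivisionRing H] : Subring (H → H) :=
  Subring.closure ({f | ∃ c : H, f = Function.const H c} ∪ {id})

/-- `F` is a classical right quotient ring of `R` via the injective ring homomorphism `φ`:
every element of `F` is of the form `φ a * (φ b)⁻¹` with `b ≠ 0`. -/
def IsClassicalRightQuotient {R F : Type*} [Ring R] [DivisionRing F] (φ : R →+* F) : Prop :=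
  Function.Injective φ ∧ ∀ x : F, ∃ a b : R, b ≠ 0 ∧ x = φ a * (φ b)⁻¹

/-- Auxiliary construction for the iterated polynomial ring. -/
noncomputable def IterPolyAux (H : Type u) [Ring H] : ℕ → ((T : Type u) × Ring T)
  | 0 => ⟨H, inferInstance⟩
  | n + 1 =>
    letI := (IterPolyAux H n).2
    ⟨Polynomial (IterPolyAux H n).1, inferInstance⟩

/-- The iterated polynomial ring `H_c[t₁, …, t_n]` in `n` central variables over `H`:
`IterPoly H 0 = H` and `IterPoly H (n + 1) = Polynomial (IterPoly H n)`. -/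
def IterPoly (H : Type u) [Ring H] (n : ℕ) : Type u := (IterPolyAux H n).1

noncomputable instance (H : Type u) [Ring H] (n : ℕ) : Ring (IterPoly H n) :=
  (IterPolyAux H n).2

/-!
Let `R` be a domain that is a finite free module over its center `Z`. Every `b ≠ 0` in `R` is
integral over `Z`, and the constant term of an integral equation of `b` with the powers of `b`
divided out gives a right multiple `b * c` that is a nonzero element of `Z`. So every element of
a classical right quotient ring `F` of `R` has a central denominator: as a `Z`-module `F` is the
localization of `R` at `Z \ {0}`, and the center of `F` is the fraction field of `Z`. A `Z`-basis
of `R` is then a `Z(F)`-basis of `F`. For `R = H_c[t₁, …, t_n]` such a basis comes from a basis of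
`H` over its center, because the center of `R[X]` consists of the polynomials with central
coefficients.
-/

open Polynomial

namespace Polynomial

variable {R : Type*} [Ring R]

theorem mem_center_iff {p : R[X]} :
    p ∈ Subring.center R[X] ↔ ∀ n, p.coeff n ∈ Subring.center R := by
  simp only [Subring.mem_center_iff]
  refine ⟨fun hp n a => by simpa only [coeff_C_mul, coeff_mul_C] using congr(coeff $(hp (C a)) n),
    fun h q => ?_⟩
  induction q using Polynomial.induction_on' with
  | add f g hf hg => rw [add_mul, mul_add, hf, hg]
  | monomial n a =>
    have hC : C a * p = p * C a := ext fun i => by rw [coeff_C_mul, coeff_mul_C, h i a]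
    rw [← C_mul_X_pow_eq_monomial, mul_assoc, X_pow_mul, ← mul_assoc, hC, mul_assoc]

theorem monomial_mem_center {z : R} (hz : z ∈ Subring.center R) (n : ℕ) :
    monomial n z ∈ Subring.center R[X] :=
  mem_center_iff.2 fun i => by
    rw [coeff_monomial]
    split_ifs
    exacts [hz, zero_mem _]

theorem exists_coeff_zero_ne_zero_aeval_eq_zero {Z A : Type*} [CommRing Z] [Ring A]
    [NoZeroDivisors A] [Algebra Z A] {p : Z[X]} (hp : p ≠ 0) {b : A} (hb : b ≠ 0)
    (hpb : aeval b p = 0) : ∃ q : Z[X], q.coeff 0 ≠ 0 ∧ aeval b q = 0 := by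
  obtain ⟨q, hpq, hXq⟩ := p.exists_eq_pow_rootMultiplicity_mul_and_not_dvd hp 0
  rw [C_0, sub_zero] at hpq hXq
  rw [hpq, map_mul, map_pow, aeval_X] at hpb
  exact ⟨q, mt X_dvd_iff.2 hXq, (mul_eq_zero.1 hpb).resolve_left (pow_ne_zero _ hb)⟩

end Polynomial

noncomputable def Module.Basis.polynomialCenter {R ι : Type*} [Ring R]
    (B : Basis ι (Subring.center R) R) : Basis ι (Subring.center R[X]) R[X] :=
  .mk (v := fun i => C (B i))
    (linearIndependent_iff'.2 fun s g hg i hi => Subtype.ext <| Polynomial.ext fun n => by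
      have hcoeff : ∑ j ∈ s, (⟨(g j : R[X]).coeff n, Polynomial.mem_center_iff.1 (g j).2 n⟩ :
          Subring.center R) • B j = 0 := by
        simpa only [Subring.smul_def, smul_eq_mul, coeff_mul_C, finsetSum_coeff, coeff_zero]
          using congr(coeff $hg n)
      exact congrArg Subtype.val (linearIndependent_iff'.1 B.linearIndependent s _ hcoeff i hi))
    (by
      rintro p -
      induction p using Polynomial.induction_on' with
      | add p q hp hq => exact Submodule.add_mem _ hp hq
      | monomial n a =>
        rw [← B.linearCombination_repr a, Finsupp.linearCombination_apply, map_finsuppSum]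
        refine Submodule.finsuppSum_mem _ _ _ _ fun i _ => ?_
        have : monomial n (B.repr a i • B i) =
            (⟨monomial n (B.repr a i : R), monomial_mem_center (B.repr a i).2 n⟩ :
              Subring.center R[X]) • C (B i) :=
          (monomial_mul_C ..).symm
        rw [this]
        exact Submodule.smul_mem _ _ (Submodule.subset_span ⟨i, rfl⟩))

theorem IsIntegral.exists_mul_eq_algebraMap {Z A : Type*} [CommRing Z] [Ring A]
    [IsDomain A] [Algebra Z A] {b : A} (hb : IsIntegral Z b) (hb0 : b ≠ 0) :
    ∃ (c : A) (z : Z), z ≠ 0 ∧ b * c = algebraMap Z A z := by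
  have := Module.nontrivial Z A
  obtain ⟨p, hp, hpb⟩ := hb
  obtain ⟨q, hq0, hqb⟩ :=
    exists_coeff_zero_ne_zero_aeval_eq_zero hp.ne_zero hb0 (by rwa [aeval_def])
  refine ⟨-aeval b q.divX, q.coeff 0, hq0, ?_⟩
  rw [← X_mul_divX_add q, map_add, map_mul, aeval_X, aeval_C, add_eq_zero_iff_eq_neg] at hqb
  rw [mul_neg, hqb, neg_neg]

theorem exists_mul_mem_center_ne_zero {R : Type*} [Ring R] [IsDomain R]
    [Module.Finite (Subring.center R) R] {b : R} (hb : b ≠ 0) :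
    ∃ c, b * c ∈ Subring.center R ∧ b * c ≠ 0 := by
  obtain ⟨c, z, hz, hbc⟩ := (IsIntegral.of_finite (Subring.center R) b).exists_mul_eq_algebraMap hb
  exact ⟨c, hbc ▸ z.2, hbc ▸ (ZeroMemClass.coe_eq_zero).not.2 hz⟩

theorem mem_center_of_map_mem_center {R S : Type*} [Ring R] [Ring S] {φ : R →+* S}
    (hφ : Function.Injective φ) {a : R} (ha : φ a ∈ Subring.center S) :
    a ∈ Subring.center R :=
  Subring.mem_center_iff.2 fun g => hφ <| by
    rw [map_mul, map_mul, Subring.mem_center_iff.1 ha]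

namespace IsClassicalRightQuotient

variable {R F : Type*} [Ring R] [DivisionRing F] {φ : R →+* F}

theorem map_ne_zero (hφ : IsClassicalRightQuotient φ) {a : R} (ha : a ≠ 0) : φ a ≠ 0 :=
  (map_ne_zero_iff φ hφ.1).2 ha

theorem map_mem_center (hφ : IsClassicalRightQuotient φ) {z : R} (hz : z ∈ Subring.center R) :
    φ z ∈ Subring.center F := by
  have hcomm (a : R) : Commute (φ z) (φ a) := by
    simp only [Commute, SemiconjBy, ← map_mul, Subring.mem_center_iff.1 hz a]
  refine Subring.mem_center_iff.2 fun x => ?_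
  obtain ⟨a, b, -, rfl⟩ := hφ.2 x
  exact ((hcomm a).mul_right (hcomm b).inv_right₀).eq.symm

theorem exists_mem_center_mul_eq [IsDomain R] [Module.Finite (Subring.center R) R]
    (hφ : IsClassicalRightQuotient φ) (x : F) :
    ∃ a, ∃ c ∈ Subring.center R, c ≠ 0 ∧ φ c * x = φ a := by
  obtain ⟨a, b, hb, rfl⟩ := hφ.2 x
  obtain ⟨c, hbc, hbc0⟩ := exists_mul_mem_center_ne_zero hb
  refine ⟨a * c, b * c, hbc, hbc0, ?_⟩
  rw [← Subring.mem_center_iff.1 (hφ.map_mem_center hbc), map_mul, map_mul, mul_assoc,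
    inv_mul_cancel_left₀ (hφ.map_ne_zero hb)]

theorem exists_mem_center_mul_eq_of_mem_center [IsDomain R] [Module.Finite (Subring.center R) R]
    (hφ : IsClassicalRightQuotient φ) {x : F} (hx : x ∈ Subring.center F) :
    ∃ a ∈ Subring.center R, ∃ c ∈ Subring.center R, c ≠ 0 ∧ φ c * x = φ a := by
  obtain ⟨a, c, hc, hc0, hca⟩ := hφ.exists_mem_center_mul_eq x
  exact ⟨a, mem_center_of_map_mem_center hφ.1 (hca ▸ mul_mem (hφ.map_mem_center hc) hx),
    c, hc, hc0, hca⟩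

theorem finrank_center_eq [IsDomain R] [Module.Free (Subring.center R) R]
    [Module.Finite (Subring.center R) R] (hφ : IsClassicalRightQuotient φ) :
    Module.finrank (Subring.center F) F = Module.finrank (Subring.center R) R := by
  set Z := Subring.center R
  set K := Subring.center F
  let ψ : Z →+* K := (φ.comp Z.subtype).codRestrict K fun z => hφ.map_mem_center z.2
  let _ : Algebra Z K := ψ.toAlgebra
  let _ : Algebra Z F := Algebra.compHom F ψ
  have : IsScalarTower Z K F := IsScalarTower.of_algebraMap_eq fun _ => rfl
  let f : R →ₗ[Z] F :=
    { toFun := φ, map_add' := map_add φ, map_smul' := fun z r => map_mul φ (z : R) r }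
  have : FaithfulSMul Z K := (faithfulSMul_iff_algebraMap_injective Z K).2
    fun z w h => Subtype.ext (hφ.1 (congrArg Subtype.val h))
  have : IsFractionRing Z K := IsFractionRing.of_field Z K fun z => by
    obtain ⟨a, ha, c, hc, hc0, hca⟩ := hφ.exists_mem_center_mul_eq_of_mem_center z.2
    have hc0' : algebraMap Z K ⟨c, hc⟩ ≠ 0 := fun h => hφ.map_ne_zero hc0 (congrArg Subtype.val h)
    refine ⟨⟨a, ha⟩, ⟨c, hc⟩, (eq_div_iff hc0').2 ?_⟩
    exact Subtype.ext ((Subring.mem_center_iff.1 z.2 _).symm.trans hca)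
  have : IsLocalizedModule (nonZeroDivisors Z) f :=
    { map_units := fun s => (Module.End.isUnit_iff _).2 <| mulLeft_bijective₀ (φ s) <|
        hφ.map_ne_zero fun h => nonZeroDivisors.coe_ne_zero s (Subtype.ext h)
      surj := fun x => by
        obtain ⟨a, c, hc, hc0, hca⟩ := hφ.exists_mem_center_mul_eq x
        exact ⟨(a, ⟨⟨c, hc⟩, mem_nonZeroDivisors_of_ne_zero fun h => hc0 congr($h.1)⟩), hca⟩
      exists_of_eq := fun h => ⟨1, by rw [one_smul, one_smul]; exact hφ.1 h⟩ }
  rw [Module.finrank_eq_card_basis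
    ((Module.Free.chooseBasis Z R).ofIsLocalizedModule K (nonZeroDivisors Z) f),
    Module.finrank_eq_card_chooseBasisIndex]

end IsClassicalRightQuotient

namespace IterPoly

variable {H : Type u} [Ring H]

instance isDomain [IsDomain H] (n : ℕ) : IsDomain (IterPoly H n) := by
  induction n with
  | zero => exact inferInstanceAs (IsDomain H)
  | succ n ih => exact inferInstanceAs (IsDomain (IterPoly H n)[X])

noncomputable def basisCenter {ι : Type*} (B : Module.Basis ι (Subring.center H) H) :
    ∀ n, Module.Basis ι (Subring.center (IterPoly H n)) (IterPoly H n)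
  | 0 => B
  | n + 1 => (basisCenter B n).polynomialCenter

end IterPoly

theorem dim_over_center_of_fraction_field_of_iterated_central_polynomials_general
    {H : Type u} [DivisionRing H] [FiniteDimensional (Subring.center H) H] (d : ℕ)
    (hd : Module.finrank (Subring.center H) H = d)
    (n : ℕ)
    {F : Type v} [DivisionRing F]
    (φ : IterPoly H n →+* F) (hφ : IsClassicalRightQuotient φ) :
    IsField (Subring.center F) ∧ Module.finrank (Subring.center F) F = d := by
  let B := IterPoly.basisCenter (Module.finBasis (Subring.center H) H) n
  have := Module.Free.of_basis B
  have := Module.Finite.of_basis B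
  refine ⟨Field.toIsField _, ?_⟩
  rw [hφ.finrank_center_eq, Module.finrank_eq_card_basis B, Fintype.card_fin, hd]

theorem dim_over_center_of_fraction_field_of_iterated_central_polynomials
    {H : Type u} [DivisionRing H] [FiniteDimensional (Subring.center H) H] (d : ℕ)
    (hd : Module.finrank (Subring.center H) H = d)
    (n : ℕ) (hn : 1 ≤ n)
    {F : Type v} [DivisionRing F]
    (φ : IterPoly H n →+* F) (hφ : IsClassicalRightQuotient φ) :
    IsField (Subring.center F) ∧ Module.finrank (Subring.center F) F = d :=
  dim_over_center_of_fraction_field_of_iterated_central_polynomials_general d hd n φ hφ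
end

section
/- Let H be a division ring of finite dimension over its center k, and assume k is infinite. Then the ring H[X] of polynomial functions on H has a classical right field of fractions: there exist a division ring F and an injective ring homomorphism φ : H[X] → F such that every element of F can be written as φ(a)·φ(b)⁻¹ with a, b ∈ H[X], b ≠ 0. -/
universe u v w x

/-!
Write `k` for the centre of `H` and fix a `k`-basis `b` of `H`. The Artin–Whaples argument shows
that the maps `x ↦ b i * x * b j` are `k`-linearly independent, so by counting dimensions they span
`End_k H`: every `k`-linear map, in particular every coordinate function, is a polynomial function.
Hence every element of `H[X]` has the form `x ↦ ∑ i, q i (coordinates of x) • b i` with commutative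
polynomials `q i` over `k`. The `k`-valued functions `q (coordinates of x)` are central in `H[X]`,
so `H[X]` is a finite module over its centre; and evaluating at a point where `q i * r j` does not
vanish (`k` is infinite) shows that `H[X]` is a domain.

In a domain integral over its centre every `s ≠ 0` has a nonzero central multiple `s * t`: strip
the powers of `X` from an integral equation of `s` and read off the constant term. These multiples
give the Ore condition, and `s⁻¹ * r = (t * r) * (s * t)⁻¹` turns left fractions into right ones.
-/

open Polynomial in
theorem IsIntegral.exists_mul_eq_algebraMap_s8 {R A : Type*} [CommRing R] [Ring A]
    [NoZeroDivisors A] [Algebra R A] {s : A} (hs : IsIntegral R s) (hs0 : s ≠ 0) :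
    ∃ (t : A) (r : R), r ≠ 0 ∧ s * t = algebraMap R A r := by
  obtain ⟨p, hmonic, hp⟩ := hs
  have : Nontrivial A := ⟨s, 0, hs0⟩
  have : Nontrivial R := (algebraMap R A).domain_nontrivial
  obtain ⟨q, hpq, hq⟩ := p.exists_eq_pow_rootMultiplicity_mul_and_not_dvd hmonic.ne_zero 0
  rw [map_zero, sub_zero, X_dvd_iff] at hq
  have hqs : aeval s q = 0 := by
    rw [← aeval_def, hpq, map_zero, sub_zero, map_mul, map_pow, aeval_X] at hp
    exact (mul_eq_zero.1 hp).resolve_left (pow_ne_zero _ hs0)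
  refine ⟨-aeval s q.divX, q.coeff 0, hq, ?_⟩
  rw [← X_mul_divX_add q, map_add, map_mul, aeval_X, aeval_C] at hqs
  rw [mul_neg, neg_eq_iff_add_eq_zero, hqs]

open OreLocalization nonZeroDivisors in
theorem exists_isClassicalRightQuotient_of_exists_mul_mem_center {A : Type u} [Ring A]
    [IsDomain A] (h : ∀ s : A, s ≠ 0 → ∃ t, s * t ≠ 0 ∧ s * t ∈ Subring.center A) :
    ∃ (F : Type u) (instF : DivisionRing F),
      letI := instF
      ∃ φ : A →+* F, IsClassicalRightQuotient φ := by
  choose! t ht using h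
  have t_mul_comm (s : A) (hs : s ≠ 0) : t s * s = s * t s := by
    refine mul_left_cancel₀ hs ?_
    rw [← mul_assoc, Subring.mem_center_iff.1 (ht s hs).2 s]
  -- the Ore condition `(s * t s) * r = (r * t s) * s`
  let : OreSet A⁰ := oreSetOfNoZeroDivisors (fun r s => r * t s)
    (fun _ s => ⟨s * t s, mem_nonZeroDivisors_of_ne_zero (ht s (nonZeroDivisors.ne_zero s.2)).1⟩)
    (fun r s => by
      have hs := nonZeroDivisors.ne_zero s.2
      rw [← Subring.mem_center_iff.1 (ht s hs).2 r, mul_assoc, t_mul_comm s hs])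
  have hinj : Function.Injective (numeratorRingHom : A →+* A[A⁰⁻¹]) :=
    numeratorHom_inj inf_le_left
  refine ⟨A[A⁰⁻¹], inferInstance, numeratorRingHom, hinj, ?_⟩
  intro x
  induction x using OreLocalization.ind with
  | _ r s =>
    have hs := nonZeroDivisors.ne_zero s.2
    set φ : A →+* A[A⁰⁻¹] := numeratorRingHom
    have hdiv : r /ₒ s = (φ s)⁻¹ * φ r := by
      rw [eq_inv_mul_iff_mul_eq₀ ((map_ne_zero_iff φ hinj).2 hs)]
      exact OreLocalization.mul_cancel
    have hinv : (φ s)⁻¹ = φ (t s) * (φ (s * t s))⁻¹ := by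
      refine inv_eq_of_mul_eq_one_right ?_
      rw [← mul_assoc, ← map_mul, mul_inv_cancel₀ ((map_ne_zero_iff φ hinj).2 (ht s hs).1)]
    have hcomm : Commute (φ (s * t s)) (φ r) :=
      Commute.map (Subring.mem_center_iff.1 (ht s hs).2 r).symm φ
    refine ⟨t s * r, s * t s, (ht s hs).1, ?_⟩
    rw [hdiv, hinv, mul_assoc, hcomm.inv_left₀.eq, ← mul_assoc, ← map_mul]

theorem exists_isClassicalRightQuotient_of_isIntegral_center {A : Type u} [Ring A] [IsDomain A]
    [Algebra.IsIntegral (Subring.center A) A] :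
    ∃ (F : Type u) (instF : DivisionRing F),
      letI := instF
      ∃ φ : A →+* F, IsClassicalRightQuotient φ :=
  exists_isClassicalRightQuotient_of_exists_mul_mem_center fun s hs => by
    obtain ⟨t, r, hr, hst⟩ :=
      (Algebra.IsIntegral.isIntegral (R := Subring.center A) s).exists_mul_eq_algebraMap_s8 hs
    exact ⟨t, hst ▸ (Subring.coe_eq_zero_iff _).not.2 hr, hst ▸ r.2⟩

section

variable {H : Type u} [DivisionRing H]

local notation "k" => Subring.center H

theorem eq_zero_of_forall_sum_mul_mul_eq_zero {ι : Type*} {a c : ι → H} {s : Finset ι}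
    (ha : LinearIndepOn k a s) (h : ∀ x, ∑ i ∈ s, a i * x * c i = 0) : ∀ i ∈ s, c i = 0 := by
  classical
  induction s using Finset.strongInduction generalizing c with
  | H s ih =>
  by_contra! ⟨j, hj, hcj⟩
  set c' := fun i => c i * (c j)⁻¹
  have hc'j : c' j = 1 := mul_inv_cancel₀ hcj
  have h' (x : H) : ∑ i ∈ s, a i * x * c' i = 0 := by
    simp only [c', ← mul_assoc, ← Finset.sum_mul, h x, zero_mul]
  -- the commutators `c' i * y - y * c' i` satisfy the same relations and vanish at `j`
  have hcentral (i : ι) (hi : i ∈ s) : c' i ∈ k := by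
    refine Subring.mem_center_iff.2 fun y => ?_
    obtain rfl | hij := eq_or_ne i j
    · rw [hc'j, one_mul, mul_one]
    refine (sub_eq_zero.1 (ih (s.erase j) (Finset.erase_ssubset hj)
      (ha.mono (Finset.coe_subset.2 (s.erase_subset j))) (c := fun i => c' i * y - y * c' i) ?_
      i (Finset.mem_erase.2 ⟨hij, hi⟩))).symm
    intro x
    rw [Finset.sum_erase _ (by rw [hc'j, one_mul, mul_one, sub_self, mul_zero])]
    calc ∑ i ∈ s, a i * x * (c' i * y - y * c' i)
        = (∑ i ∈ s, a i * x * c' i) * y - ∑ i ∈ s, a i * (x * y) * c' i := by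
          simp only [mul_sub, Finset.sum_sub_distrib, Finset.sum_mul, mul_assoc]
      _ = 0 := by rw [h' x, h' (x * y), zero_mul, sub_zero]
  have := linearIndepOn_finset_iff.1 ha
    (fun i => if hi : i ∈ s then ⟨c' i, hcentral i hi⟩ else 0) ?_ j hj
  · simp [hj, hc'j] at this
  · rw [← h' 1]
    refine Finset.sum_congr rfl fun i hi => ?_
    rw [dif_pos hi, mul_one]
    exact (Subring.mem_center_iff.1 (hcentral i hi) (a i)).symm

variable {ι : Type*} [Fintype ι]

theorem Module.Basis.linearIndependent_mulLeftRight (b : Basis ι k H) :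
    LinearIndependent k fun p : ι × ι => LinearMap.mulLeftRight k (b p.1, b p.2) := by
  rw [Fintype.linearIndependent_iff]
  intro g hg p
  have hrow : ∀ i ∈ Finset.univ, ∑ j, g (i, j) • b j = 0 := by
    refine eq_zero_of_forall_sum_mul_mul_eq_zero (b.linearIndependent.linearIndepOn _) fun x => ?_
    simpa [Fintype.sum_prod_type, Finset.mul_sum, mul_smul_comm] using LinearMap.congr_fun hg x
  exact Fintype.linearIndependent_iff.1 b.linearIndependent _ (hrow p.1 (Finset.mem_univ _)) p.2

theorem Module.Basis.span_mulLeftRight [FiniteDimensional k H] (b : Basis ι k H) :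
    Submodule.span k (Set.range fun p : ι × ι => LinearMap.mulLeftRight k (b p.1, b p.2)) = ⊤ :=
  b.linearIndependent_mulLeftRight.span_eq_top_of_card_eq_finrank' <| by
    rw [Module.finrank_linearMap, Module.finrank_eq_card_basis b, Fintype.card_prod]

theorem const_mem_polyFunRing (c : H) : Function.const H c ∈ polyFunRing H :=
  Subring.subset_closure (Or.inl ⟨c, rfl⟩)

theorem id_mem_polyFunRing : (id : H → H) ∈ polyFunRing H :=
  Subring.subset_closure (Or.inr rfl)

theorem LinearMap.coe_mem_polyFunRing [FiniteDimensional k H] (f : H →ₗ[k] H) :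
    ⇑f ∈ polyFunRing H := by
  let b := Module.finBasis k H
  obtain ⟨g, rfl⟩ := (Submodule.mem_span_range_iff_exists_fun k).1
    (b.span_mulLeftRight ▸ Submodule.mem_top : f ∈ _)
  rw [LinearMap.coe_sum]
  refine Subring.sum_mem _ fun p _ => ?_
  have : ⇑(g p • LinearMap.mulLeftRight k (b p.1, b p.2)) =
      Function.const H (g p : H) *
        (Function.const H (b p.1) * _root_.id * Function.const H (b p.2)) := rfl
  rw [this]
  exact Subring.mul_mem _ (const_mem_polyFunRing _) <| Subring.mul_mem _
    (Subring.mul_mem _ (const_mem_polyFunRing _) id_mem_polyFunRing) (const_mem_polyFunRing _)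

theorem Module.Basis.coord_mem_polyFunRing [FiniteDimensional k H] (b : Basis ι k H) (i : ι) :
    (fun x => (b.equivFun x i : H)) ∈ polyFunRing H :=
  ((Algebra.linearMap k H).comp ((LinearMap.proj i).comp b.equivFun.toLinearMap)).coe_mem_polyFunRing

noncomputable def evalCoords (b : Module.Basis ι k H) : MvPolynomial ι k →+* (H → H) :=
  RingHom.pi fun x => (Subring.center H).subtype.comp (MvPolynomial.eval (b.equivFun x))

theorem evalCoords_apply (b : Module.Basis ι k H) (p : MvPolynomial ι k) (x : H) :
    evalCoords b p x = MvPolynomial.eval (b.equivFun x) p := rfl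

theorem commute_evalCoords (b : Module.Basis ι k H) (p : MvPolynomial ι k) (f : H → H) :
    Commute (evalCoords b p) f :=
  funext fun x => (Subring.mem_center_iff.1 (MvPolynomial.eval (b.equivFun x) p).2 (f x)).symm

theorem evalCoords_mem_polyFunRing [FiniteDimensional k H] (b : Module.Basis ι k H)
    (p : MvPolynomial ι k) : evalCoords b p ∈ polyFunRing H := by
  induction p using MvPolynomial.induction_on with
  | C c =>
    have : evalCoords b (MvPolynomial.C c) = Function.const H (c : H) :=
      funext fun x => by simp [evalCoords_apply]
    exact this ▸ const_mem_polyFunRing _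
  | add p q hp hq => exact map_add (evalCoords b) p q ▸ Subring.add_mem _ hp hq
  | mul_X p i hp =>
    have : evalCoords b (MvPolynomial.X i) = fun x => (b.equivFun x i : H) :=
      funext fun x => by simp [evalCoords_apply]
    exact map_mul (evalCoords b) p _ ▸ Subring.mul_mem _ hp (this ▸ b.coord_mem_polyFunRing i)

noncomputable def polyFunOfCoeffs (b : Module.Basis ι k H) (q : ι → MvPolynomial ι k) : H → H :=
  ∑ i, evalCoords b (q i) * Function.const H (b i)

theorem polyFunOfCoeffs_apply (b : Module.Basis ι k H) (q : ι → MvPolynomial ι k) (x : H) :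
    polyFunOfCoeffs b q x = ∑ i, MvPolynomial.eval (b.equivFun x) (q i) • b i := by
  simp only [polyFunOfCoeffs, Finset.sum_apply, Pi.mul_apply, Function.const_apply,
    evalCoords_apply, Subring.smul_def, smul_eq_mul]

theorem polyFunOfCoeffs_equivFun_symm (b : Module.Basis ι k H) (q : ι → MvPolynomial ι k)
    (v : ι → k) :
    polyFunOfCoeffs b q (b.equivFun.symm v) =
      b.equivFun.symm fun i => MvPolynomial.eval v (q i) := by
  rw [polyFunOfCoeffs_apply, LinearEquiv.apply_symm_apply, Module.Basis.equivFun_symm_apply]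

theorem polyFunOfCoeffs_equivFun_symm_ne_zero (b : Module.Basis ι k H)
    {q : ι → MvPolynomial ι k} {v : ι → k} {i : ι} (hi : MvPolynomial.eval v (q i) ≠ 0) :
    polyFunOfCoeffs b q (b.equivFun.symm v) ≠ 0 := by
  rw [polyFunOfCoeffs_equivFun_symm, map_ne_zero_iff _ b.equivFun.symm.injective]
  exact Function.ne_iff.2 ⟨i, hi⟩

theorem const_eq_polyFunOfCoeffs (b : Module.Basis ι k H) (c : H) :
    Function.const H c = polyFunOfCoeffs b fun i => MvPolynomial.C (b.equivFun c i) := by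
  ext x
  simp only [polyFunOfCoeffs_apply, MvPolynomial.eval_C, Function.const_apply, b.sum_equivFun]

theorem id_eq_polyFunOfCoeffs (b : Module.Basis ι k H) :
    (id : H → H) = polyFunOfCoeffs b MvPolynomial.X := by
  ext x
  simp only [polyFunOfCoeffs_apply, MvPolynomial.eval_X, id, b.sum_equivFun]

theorem polyFunOfCoeffs_zero (b : Module.Basis ι k H) : polyFunOfCoeffs b 0 = 0 := by
  simp only [polyFunOfCoeffs, Pi.zero_apply, map_zero, zero_mul, Finset.sum_const_zero]

theorem polyFunOfCoeffs_add (b : Module.Basis ι k H) (q r : ι → MvPolynomial ι k) :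
    polyFunOfCoeffs b (q + r) = polyFunOfCoeffs b q + polyFunOfCoeffs b r := by
  simp only [polyFunOfCoeffs, Pi.add_apply, map_add, add_mul, Finset.sum_add_distrib]

theorem polyFunOfCoeffs_neg (b : Module.Basis ι k H) (q : ι → MvPolynomial ι k) :
    polyFunOfCoeffs b (-q) = -polyFunOfCoeffs b q := by
  simp only [polyFunOfCoeffs, Pi.neg_apply, map_neg, neg_mul, Finset.sum_neg_distrib]

theorem polyFunOfCoeffs_mul (b : Module.Basis ι k H) (q r : ι → MvPolynomial ι k) :
    polyFunOfCoeffs b q * polyFunOfCoeffs b r = polyFunOfCoeffs b fun l =>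
      ∑ i, ∑ j, q i * r j * MvPolynomial.C (b.equivFun (b i * b j) l) := by
  ext x
  simp only [Pi.mul_apply, polyFunOfCoeffs_apply, map_sum, map_mul, MvPolynomial.eval_C,
    Finset.sum_mul, Finset.mul_sum, smul_mul_smul_comm, Finset.sum_smul, mul_smul]
  rw [Finset.sum_comm]
  conv_rhs => rw [Finset.sum_comm]; enter [2, i]; rw [Finset.sum_comm]
  refine Finset.sum_congr rfl fun i _ => Finset.sum_congr rfl fun j _ => ?_
  rw [← Finset.smul_sum, ← Finset.smul_sum, b.sum_equivFun]

theorem exists_polyFunOfCoeffs_eq (b : Module.Basis ι k H) {f : H → H}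
    (hf : f ∈ polyFunRing H) : ∃ q, polyFunOfCoeffs b q = f := by
  induction hf using Subring.closure_induction with
  | mem f hf =>
    rcases hf with ⟨c, rfl⟩ | rfl
    · exact ⟨_, (const_eq_polyFunOfCoeffs b c).symm⟩
    · exact ⟨_, (id_eq_polyFunOfCoeffs b).symm⟩
  | zero => exact ⟨0, polyFunOfCoeffs_zero b⟩
  | one => exact ⟨_, (const_eq_polyFunOfCoeffs b 1).symm⟩
  | add f g _ _ hf hg =>
    obtain ⟨q, rfl⟩ := hf
    obtain ⟨r, rfl⟩ := hg
    exact ⟨q + r, polyFunOfCoeffs_add b q r⟩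
  | neg f _ hf =>
    obtain ⟨q, rfl⟩ := hf
    exact ⟨-q, polyFunOfCoeffs_neg b q⟩
  | mul f g _ _ hf hg =>
    obtain ⟨q, rfl⟩ := hf
    obtain ⟨r, rfl⟩ := hg
    exact ⟨_, (polyFunOfCoeffs_mul b q r).symm⟩

theorem polyFunRing.isDomain [FiniteDimensional k H] [Infinite k] : IsDomain (polyFunRing H) := by
  refine @NoZeroDivisors.to_isDomain _ _ _ ⟨fun {f g} hfg => ?_⟩
  by_contra! ⟨hf, hg⟩
  let b := Module.finBasis k H
  obtain ⟨q, hq⟩ := exists_polyFunOfCoeffs_eq b f.2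
  obtain ⟨r, hr⟩ := exists_polyFunOfCoeffs_eq b g.2
  obtain ⟨i, hi⟩ : ∃ i, q i ≠ 0 := Function.ne_iff.1 fun hq0 =>
    hf (Subtype.ext (hq ▸ hq0 ▸ polyFunOfCoeffs_zero b))
  obtain ⟨j, hj⟩ : ∃ j, r j ≠ 0 := Function.ne_iff.1 fun hr0 =>
    hg (Subtype.ext (hr ▸ hr0 ▸ polyFunOfCoeffs_zero b))
  obtain ⟨v, hv⟩ : ∃ v, MvPolynomial.eval v (q i * r j) ≠ 0 := by
    by_contra! h
    exact mul_ne_zero hi hj (MvPolynomial.funext fun v => by simpa using h v)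
  rw [map_mul] at hv
  have := congrFun (congrArg Subtype.val hfg) (b.equivFun.symm v)
  rw [Subring.coe_mul, Pi.mul_apply, ← hq, ← hr] at this
  exact mul_ne_zero (polyFunOfCoeffs_equivFun_symm_ne_zero b (left_ne_zero_of_mul hv))
    (polyFunOfCoeffs_equivFun_symm_ne_zero b (right_ne_zero_of_mul hv)) this

theorem evalCoords_mem_center_polyFunRing [FiniteDimensional k H] (b : Module.Basis ι k H)
    (p : MvPolynomial ι k) :
    (⟨evalCoords b p, evalCoords_mem_polyFunRing b p⟩ : polyFunRing H) ∈
      Subring.center (polyFunRing H) :=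
  Subring.mem_center_iff.2 fun f => Subtype.ext (commute_evalCoords b p f).symm

theorem polyFunRing.finite_center [FiniteDimensional k H] :
    Module.Finite (Subring.center (polyFunRing H)) (polyFunRing H) := by
  let b := Module.finBasis k H
  refine ⟨Submodule.fg_def.2 ⟨Set.range fun i => ⟨Function.const H (b i), const_mem_polyFunRing _⟩,
    Set.finite_range _, eq_top_iff.2 fun f _ => ?_⟩⟩
  obtain ⟨q, hq⟩ := exists_polyFunOfCoeffs_eq b f.2
  refine (Submodule.mem_span_range_iff_exists_fun _).2
    ⟨fun i => ⟨_, evalCoords_mem_center_polyFunRing b (q i)⟩, Subtype.ext ?_⟩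
  rw [← hq, AddSubmonoidClass.coe_finsetSum]
  rfl

end

theorem polyFunRing_has_classical_right_field_of_fractions
    {H : Type u} [DivisionRing H] [FiniteDimensional (Subring.center H) H]
    (hk : Infinite (Subring.center H)) :
    ∃ (F : Type u) (instF : DivisionRing F),
      letI := instF
      ∃ φ : polyFunRing H →+* F, IsClassicalRightQuotient φ := by
  have : IsDomain (polyFunRing H) := polyFunRing.isDomain
  have : Module.Finite (Subring.center (polyFunRing H)) (polyFunRing H) :=
    polyFunRing.finite_center
  exact exists_isClassicalRightQuotient_of_isIntegral_center
end
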